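/- Let λ > 0, x₁,…,x_t ∈ ℝ^d, Z_t = λI + Σ_{i=1}^t x_i x_iᵀ, and let y_i, y_i^s ∈ ℝ with Σ_{i=1}^t |y_i − y_i^s| = C(t). Define b_t = Σ y_i x_i, b_t^s = Σ y_i^s x_i, μ_t = Z_t^{-1} b_t, μ_t^s = Z_t^{-1} b_t^s. Then ‖μ_t − μ_t^s‖_{Z_t} ≤ C(t). -/

import Mathlib

/-!
With `cᵢ = yᵢ - yᵢˢ` and `w = μ - μˢ = Z⁻¹ ∑ cᵢ xᵢ`, the quadratic form is
`wᵀ Z w = ∑ cᵢ ⟨xᵢ, w⟩`. Each `⟨xᵢ, w⟩²` is one of the summands of `wᵀ Z w = λ‖w‖² + ∑ ⟨xⱼ, w⟩²`,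
so `|⟨xᵢ, w⟩| ≤ ‖w‖_Z`, whence `‖w‖_Z² ≤ (∑ |cᵢ|) ‖w‖_Z`.
-/

open Matrix Finset

theorem Real.sqrt_le_of_le_mul_sqrt {q C : ℝ} (hC : 0 ≤ C) (h : q ≤ C * √q) : √q ≤ C := by
  rcases le_or_gt q 0 with hq | hq
  · rwa [Real.sqrt_eq_zero'.mpr hq]
  · have hsq : √q * √q = q := Real.mul_self_sqrt hq.le
    nlinarith [Real.sqrt_pos.mpr hq]

noncomputable def regularizedGram {ι n : Type*} [Fintype n] [DecidableEq n]
    (lam : ℝ) (s : Finset ι) (x : ι → n → ℝ) : Matrix n n ℝ :=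
  lam • 1 + ∑ i ∈ s, vecMulVec (x i) (x i)

namespace regularizedGram

variable {ι n : Type*} [Fintype n] [DecidableEq n] {lam : ℝ} {s : Finset ι} {x : ι → n → ℝ}

theorem dotProduct_mulVec_self (v : n → ℝ) :
    v ⬝ᵥ regularizedGram lam s x *ᵥ v = lam * (v ⬝ᵥ v) + ∑ i ∈ s, (x i ⬝ᵥ v) ^ 2 := by
  simp only [regularizedGram, add_mulVec, smul_mulVec, one_mulVec, sum_mulVec, vecMulVec_mulVec,
    dotProduct_add, dotProduct_smul, dotProduct_sum, op_smul_eq_smul, smul_eq_mul]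
  congr 1
  exact sum_congr rfl fun i _ => by rw [dotProduct_comm v (x i), sq]

theorem sq_dotProduct_le (hlam : 0 ≤ lam) {i : ι} (hi : i ∈ s) (v : n → ℝ) :
    (x i ⬝ᵥ v) ^ 2 ≤ v ⬝ᵥ regularizedGram lam s x *ᵥ v := by
  rw [dotProduct_mulVec_self]
  have hsum := single_le_sum (f := fun j => (x j ⬝ᵥ v) ^ 2) (fun j _ => sq_nonneg _) hi
  have hvv : 0 ≤ v ⬝ᵥ v := sum_nonneg fun j _ => mul_self_nonneg (v j)
  nlinarith

theorem posDef (hlam : 0 < lam) : (regularizedGram lam s x).PosDef :=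
  (PosDef.one.smul hlam).add_posSemidef <| posSemidef_sum s fun i _ => by
    simpa using posSemidef_vecMulVec_self_star (x i)

theorem sqrt_inv_mulVec_sum_le (hlam : 0 < lam) (c : ι → ℝ) :
    let Z := regularizedGram lam s x
    let w := Z⁻¹ *ᵥ ∑ i ∈ s, c i • x i
    √(w ⬝ᵥ Z *ᵥ w) ≤ ∑ i ∈ s, |c i| := by
  intro Z w
  have hZw : Z *ᵥ w = ∑ i ∈ s, c i • x i := by
    rw [mulVec_mulVec, mul_nonsing_inv _ ((posDef hlam).isUnit.map detMonoidHom), one_mulVec]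
  refine Real.sqrt_le_of_le_mul_sqrt (sum_nonneg fun i _ => abs_nonneg _) ?_
  calc w ⬝ᵥ Z *ᵥ w = ∑ i ∈ s, c i * (x i ⬝ᵥ w) := by
        rw [dotProduct_comm, hZw, sum_dotProduct]
        simp only [smul_dotProduct, smul_eq_mul]
    _ ≤ ∑ i ∈ s, |c i| * √(w ⬝ᵥ Z *ᵥ w) := sum_le_sum fun i hi => by
        calc c i * (x i ⬝ᵥ w) ≤ |c i| * |x i ⬝ᵥ w| := by
              rw [← abs_mul]; exact le_abs_self _
          _ ≤ |c i| * √(w ⬝ᵥ Z *ᵥ w) := mul_le_mul_of_nonneg_left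
              (Real.abs_le_sqrt (sq_dotProduct_le hlam.le hi w)) (abs_nonneg _)
    _ = (∑ i ∈ s, |c i|) * √(w ⬝ᵥ Z *ᵥ w) := (sum_mul _ _ _).symm

end regularizedGram

theorem stmt2 (d t : ℕ) (lam : ℝ) (hlam : 0 < lam) (x : ℕ → Fin d → ℝ)
    (y ys : ℕ → ℝ) (Ct : ℝ)
    (hC : ∑ i ∈ Finset.range t, |y i - ys i| = Ct)
    (Z : Matrix (Fin d) (Fin d) ℝ)
    (hZ : Z = lam • (1 : Matrix (Fin d) (Fin d) ℝ) +
        ∑ i ∈ Finset.range t, vecMulVec (x i) (x i))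
    (b bs mu mus : Fin d → ℝ)
    (hb : b = ∑ i ∈ Finset.range t, y i • x i)
    (hbs : bs = ∑ i ∈ Finset.range t, ys i • x i)
    (hmu : mu = Z⁻¹ *ᵥ b) (hmus : mus = Z⁻¹ *ᵥ bs) :
    Real.sqrt ((mu - mus) ⬝ᵥ (Z *ᵥ (mu - mus))) ≤ Ct := by
  have hdiff : mu - mus = Z⁻¹ *ᵥ ∑ i ∈ range t, (y i - ys i) • x i := by
    simp only [hmu, hmus, hb, hbs, ← mulVec_sub, ← sum_sub_distrib, sub_smul]
  rw [hdiff, ← hC, hZ]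
  exact regularizedGram.sqrt_inv_mulVec_sum_le hlam (fun i => y i - ys i)
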